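/- arXiv:2604.09714 — 5 statements merged into one kernel-verified Lean document; each statement's English description precedes it below -/
import Mathlib

section
/- For every odd prime p, the Kurepa left factorial K_p = Σ_{n=0}^{p-1} n! satisfies K_p ≡ Bell(p-1) - 1 (mod p), where Bell(n) denotes the n-th Bell number. -/
open scoped Nat

/-- Bell numbers via the standard recurrence. -/
def bell : ℕ → ℕ
  | 0 => 1
  | (n+1) => ∑ k ∈ (Finset.range (n+1)).attach, n.choose k.1 * bell k.1
  decreasing_by exact Finset.mem_range.mp k.2

open Finset

/-- Stirling numbers of the second kind. -/
def S2 : ℕ → ℕ → ℕ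
  | 0, 0 => 1
  | 0, _+1 => 0
  | _+1, 0 => 0
  | n+1, k+1 => S2 n k + (k+1) * S2 n (k+1)

@[simp] lemma S2_zero_right (n : ℕ) : S2 (n+1) 0 = 0 := rfl
@[simp] lemma S2_zero_left (k : ℕ) : S2 0 (k+1) = 0 := rfl
@[simp] lemma S2_zero_zero : S2 0 0 = 1 := rfl
lemma S2_succ (n k : ℕ) : S2 (n+1) (k+1) = S2 n k + (k+1) * S2 n (k+1) := rfl

lemma S2_eq_zero : ∀ n k, n < k → S2 n k = 0 := by
  intro n
  induction n with
  | zero => intro k h; cases k with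
    | zero => omega
    | succ k => rfl
  | succ n ih =>
    intro k h
    cases k with
    | zero => omega
    | succ k =>
      rw [S2_succ, ih k (by omega), ih (k+1) (by omega)]; simp

lemma S2_self : ∀ n, S2 n n = 1 := by
  intro n
  induction n with
  | zero => rfl
  | succ n ih =>
    rw [S2_succ, ih, S2_eq_zero n (n+1) (by omega)]; simp

lemma sum_choose_S2_zero (m : ℕ) : ∑ j ∈ range (m+1), m.choose j * S2 j 0 = 1 := by
  rw [Finset.sum_range_succ' _ m]
  simp

lemma S2_succ_succ : ∀ n k, S2 (n+1) (k+1) = ∑ j ∈ range (n+1), n.choose j * S2 j k := by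
  intro n
  induction n with
  | zero =>
    intro k
    rw [S2_succ, S2_eq_zero 0 (k+1) (by omega)]
    simp
  | succ n ih =>
    intro k
    rw [S2_succ]
    cases k with
    | zero =>
      rw [S2_zero_right, ih 0, sum_choose_S2_zero, sum_choose_S2_zero]
    | succ m =>
      rw [ih m, ih (m+1)]
      rw [Finset.sum_range_succ' (fun j => (n+1).choose j * S2 j (m+1)) (n+1)]
      simp only [S2_zero_left, mul_zero, add_zero]
      have hshift : ∑ j ∈ range (n+1), n.choose (j+1) * S2 (j+1) (m+1)
          = ∑ j ∈ range (n+1), n.choose j * S2 j (m+1) := by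
        have h := Finset.sum_range_succ' (fun j => n.choose j * S2 j (m+1)) (n+1)
        rw [Finset.sum_range_succ (fun j => n.choose j * S2 j (m+1)) (n+1)] at h
        simpa using h.symm
      have hg : ∑ j ∈ range (n+1), n.choose j * (S2 j m + (m+1) * S2 j (m+1))
          = ∑ j ∈ range (n+1), n.choose j * S2 j m
            + (m+1) * ∑ j ∈ range (n+1), n.choose j * S2 j (m+1) := by
        rw [Finset.mul_sum, ← Finset.sum_add_distrib]
        exact Finset.sum_congr rfl fun j _ => by ring
      have expand : ∑ j ∈ range (n+1), (n+1).choose (j+1) * S2 (j+1) (m+1)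
          = (∑ j ∈ range (n+1), n.choose j * (S2 j m + (m+1) * S2 j (m+1)))
            + ∑ j ∈ range (n+1), n.choose (j+1) * S2 (j+1) (m+1) := by
        rw [← Finset.sum_add_distrib]
        exact Finset.sum_congr rfl fun j _ => by rw [Nat.choose_succ_succ, S2_succ]; ring
      rw [expand, hshift, hg]
      ring

lemma bell_succ (n : ℕ) : bell (n+1) = ∑ k ∈ Finset.range (n+1), n.choose k * bell k := by
  rw [bell, ← Finset.sum_attach (Finset.range (n+1)) (fun k => n.choose k * bell k)]

lemma bell_eq : ∀ n, bell n = ∑ k ∈ range (n+1), S2 n k := by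
  intro n
  induction n using Nat.strong_induction_on with
  | _ n ih =>
    cases n with
    | zero => simp [bell]
    | succ n =>
      rw [bell_succ]
      rw [Finset.sum_range_succ' (fun k => S2 (n+1) k) (n+1)]
      simp only [S2_zero_right, add_zero]
      have : ∀ k ∈ range (n+1), S2 (n+1) (k+1) = ∑ j ∈ range (n+1), n.choose j * S2 j k :=
        fun k _ => S2_succ_succ n k
      rw [Finset.sum_congr rfl this, Finset.sum_comm]
      refine Finset.sum_congr rfl fun j hj => ?_
      rw [← Finset.mul_sum, ih j (by simpa using hj)]
      congr 1
      apply Finset.sum_subset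
      · intro x hx
        simp only [Finset.mem_range] at *
        omega
      · intro x _ hx
        simp only [Finset.mem_range] at *
        exact S2_eq_zero j x (by omega)

/-- `f n k = ∑ (-1)^(k-j) C(k,j) j^n` -/
def fS (n k : ℕ) : ℤ := ∑ j ∈ range (k+1), (-1)^(k-j) * (k.choose j) * (j:ℤ)^n

lemma fS_zero_right (n : ℕ) : fS n 0 = (0:ℤ)^n := by
  simp [fS]

lemma fS_shift (n k : ℕ) :
    fS n (k+1) = ∑ i ∈ range (k+1), (-1:ℤ)^(k-i) * ((k+1).choose (i+1)) * ((i:ℤ)+1)^n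
      + (-1)^(k+1) * (0:ℤ)^n := by
  rw [fS, Finset.sum_range_succ' _ (k+1)]
  simp only [Nat.choose_zero_right, Nat.cast_one, mul_one, Nat.sub_zero, Nat.cast_zero]
  congr 1
  refine Finset.sum_congr rfl fun i hi => ?_
  have : k + 1 - (i+1) = k - i := by omega
  rw [this]
  push_cast
  ring

lemma fS_pascal (n k : ℕ) :
    (∑ i ∈ range (k+1), (-1:ℤ)^(k-i) * (k.choose i) * ((i:ℤ)+1)^n)
      = fS n k + fS n (k+1) := by
  have h1 : fS n (k+1) = ∑ i ∈ range (k+1), (-1:ℤ)^(k-i) * (k.choose i) * ((i:ℤ)+1)^n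
      + (∑ i ∈ range (k+1), (-1:ℤ)^(k-i) * (k.choose (i+1)) * ((i:ℤ)+1)^n)
      + (-1)^(k+1) * (0:ℤ)^n := by
    rw [fS_shift]
    congr 1
    rw [← Finset.sum_add_distrib]
    refine Finset.sum_congr rfl fun i hi => ?_
    rw [Nat.choose_succ_succ]
    push_cast
    ring
  have h2 : (∑ i ∈ range (k+1), (-1:ℤ)^(k-i) * (k.choose (i+1)) * ((i:ℤ)+1)^n)
      = -fS n k + (-1)^k * (0:ℤ)^n := by
    -- terms: i from 0..k ; term i = k has choose k (k+1) = 0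
    rw [Finset.sum_range_succ]
    rw [Nat.choose_succ_self, Nat.sub_self]
    simp only [Nat.cast_zero, mul_zero, zero_mul, add_zero]
    have : fS n k = ∑ i ∈ range k, (-1:ℤ)^(k-(i+1)) * (k.choose (i+1)) * ((i:ℤ)+1)^n
        + (-1)^k * (0:ℤ)^n := by
      rw [fS, Finset.sum_range_succ' _ k]
      push_cast
      simp
    rw [this]
    have h3 : ∀ i ∈ range k, (-1:ℤ)^(k-i) * (k.choose (i+1)) * ((i:ℤ)+1)^n
        = -((-1:ℤ)^(k-(i+1)) * (k.choose (i+1)) * ((i:ℤ)+1)^n) := by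
      intro i hi
      have hik : i < k := Finset.mem_range.mp hi
      have hk : k - i = (k - (i+1)) + 1 := by omega
      rw [hk, pow_succ]
      ring
    rw [Finset.sum_congr rfl h3, Finset.sum_neg_distrib]
    ring
  rw [h1, h2]
  ring

lemma fS_absorb (n k : ℕ) :
    fS (n+1) (k+1) = (k+1) * ∑ i ∈ range (k+1), (-1:ℤ)^(k-i) * (k.choose i) * ((i:ℤ)+1)^n := by
  rw [fS_shift]
  have h0 : ((-1:ℤ))^(k+1) * (0:ℤ)^(n+1) = 0 := by
    rw [zero_pow (Nat.succ_ne_zero n)]; ring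
  rw [h0, add_zero, Finset.mul_sum]
  refine Finset.sum_congr rfl fun i hi => ?_
  have habs : ((i:ℤ)+1) * ((k+1).choose (i+1)) = ((k:ℤ)+1) * (k.choose i) := by
    have := Nat.add_one_mul_choose_eq k i
    -- (k+1) * choose k i = choose (k+1) (i+1) * (i+1)
    have h := congrArg (fun m : ℕ => (m : ℤ)) this
    push_cast at h
    linarith
  calc (-1:ℤ)^(k-i) * ((k+1).choose (i+1)) * ((i:ℤ)+1)^(n+1)
      = (-1:ℤ)^(k-i) * (((i:ℤ)+1) * ((k+1).choose (i+1))) * ((i:ℤ)+1)^n := by ring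
    _ = ((k:ℤ)+1) * ((-1:ℤ)^(k-i) * (k.choose i) * ((i:ℤ)+1)^n) := by rw [habs]; ring

lemma fS_rec (n k : ℕ) : fS (n+1) (k+1) = (k+1) * (fS n k + fS n (k+1)) := by
  rw [fS_absorb, fS_pascal]

lemma factorial_mul_S2 : ∀ n k, (k ! : ℤ) * S2 n k = fS n k := by
  intro n
  induction n with
  | zero =>
    intro k
    cases k with
    | zero => simp [fS]
    | succ k =>
      rw [S2_eq_zero 0 (k+1) (by omega)]
      have : fS 0 (k+1) = ∑ j ∈ range (k+2), (-1:ℤ)^(k+1-j) * ((k+1).choose j) := by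
        rw [fS]
        refine Finset.sum_congr rfl fun j hj => by simp
      rw [this]
      have hrefl := Finset.sum_range_reflect (fun j => (-1:ℤ)^(k+1-j) * ((k+1).choose j)) (k+2)
      rw [← hrefl]
      have : ∀ j ∈ range (k+2), (-1:ℤ)^(k+1-(k+2-1-j)) * ((k+1).choose (k+2-1-j))
          = (-1:ℤ)^j * ((k+1).choose j) := by
        intro j hj
        have hj' : j < k+2 := Finset.mem_range.mp hj
        have e1 : k+1-(k+2-1-j) = j := by omega
        have e2 : k+2-1-j = k+1-j := by omega
        rw [e1, e2, Nat.choose_symm (by omega : j ≤ k+1)]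
      rw [Finset.sum_congr rfl this, Int.alternating_sum_range_choose]
      simp
  | succ n ih =>
    intro k
    cases k with
    | zero =>
      rw [S2_zero_right, fS_zero_right, zero_pow (Nat.succ_ne_zero n)]
      simp
    | succ k =>
      rw [fS_rec, ← ih k, ← ih (k+1), S2_succ]
      push_cast [Nat.factorial_succ]
      ring

section ModP
variable (p : ℕ) [hpf : Fact p.Prime]

lemma fS_mod (k : ℕ) (hk : 1 ≤ k) (hk2 : k ≤ p - 1) :
    ((fS (p-1) k : ℤ) : ZMod p) = (-1)^(k+1) := by
  have hp2 : 2 ≤ p := hpf.out.two_le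
  have h0 : fS 0 k = 0 := by
    rw [← factorial_mul_S2, S2_eq_zero 0 k (by omega)]; simp
  have key : ((fS (p-1) k : ℤ) : ZMod p) = ((fS 0 k : ℤ) : ZMod p) - (-1)^k := by
    rw [fS, fS]
    push_cast
    rw [Finset.sum_range_succ' (fun j => ((-1:ZMod p))^(k-j) * (k.choose j) * (j:ZMod p)^(p-1)) k]
    rw [Finset.sum_range_succ' (fun j => ((-1:ZMod p))^(k-j) * (k.choose j) * (j:ZMod p)^(0:ℕ)) k]
    have hz : ((0:ℕ):ZMod p)^(p-1) = 0 := by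
      rw [Nat.cast_zero, zero_pow (by omega)]
    have hz0 : ((0:ℕ):ZMod p)^(0:ℕ) = 1 := by norm_num
    simp only [hz, hz0, mul_zero, mul_one, add_zero, Nat.sub_zero, Nat.choose_zero_right,
      Nat.cast_one]
    have hterm : ∀ i ∈ range k, ((-1:ZMod p))^(k-(i+1)) * ((k.choose (i+1) : ℕ)) * (((i+1:ℕ)):ZMod p)^(p-1)
        = ((-1:ZMod p))^(k-(i+1)) * ((k.choose (i+1) : ℕ)) * (((i+1:ℕ)):ZMod p)^(0:ℕ) := by
      intro i hi
      have hik : i < k := Finset.mem_range.mp hi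
      have hne : (((i+1:ℕ)):ZMod p) ≠ 0 := by
        rw [Ne, ZMod.natCast_eq_zero_iff]
        intro hdvd
        have := Nat.le_of_dvd (by omega) hdvd
        omega
      rw [ZMod.pow_card_sub_one_eq_one hne, pow_zero]
    rw [Finset.sum_congr rfl hterm]
    ring
  rw [key, h0]
  simp [pow_succ]

lemma choose_mod (k : ℕ) (hk : k ≤ p - 1) :
    (((p-1).choose k : ℕ) : ZMod p) = (-1)^k := by
  induction k with
  | zero => simp
  | succ k ih =>
    have hp2 : 2 ≤ p := hpf.out.two_le
    have hk' : k ≤ p - 1 := by omega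
    have hpascal : (p-1).choose k + (p-1).choose (k+1) = p.choose (k+1) := by
      obtain ⟨m, rfl⟩ : ∃ m, p = m + 1 := ⟨p-1, by omega⟩
      simpa using (Nat.choose_succ_succ m k).symm
    have hdvd : (p : ℕ) ∣ p.choose (k+1) :=
      hpf.out.dvd_choose_self (by omega) (by omega)
    have hcast : (((p-1).choose k : ℕ) : ZMod p) + (((p-1).choose (k+1) : ℕ) : ZMod p) = 0 := by
      rw [← Nat.cast_add, hpascal, ZMod.natCast_eq_zero_iff]
      exact hdvd
    have := ih hk'
    rw [this] at hcast
    rw [pow_succ]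
    linear_combination hcast

lemma S2_mod (k : ℕ) (hk : 1 ≤ k) (hk2 : k ≤ p - 1) :
    ((S2 (p-1) k : ℕ) : ZMod p) = (((p-1-k)! : ℕ) : ZMod p) := by
  have hp2 : 2 ≤ p := hpf.out.two_le
  have hfact : (k ! : ZMod p) * (S2 (p-1) k : ZMod p) = (-1)^(k+1) := by
    have h := factorial_mul_S2 (p-1) k
    have h2 := congrArg (fun z : ℤ => (z : ZMod p)) h
    push_cast at h2
    rw [h2]
    exact fS_mod p k hk hk2
  have hfact2 : (k ! : ZMod p) * ((p-1-k)! : ZMod p) = (-1)^(k+1) := by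
    have hid := Nat.choose_mul_factorial_mul_factorial (show k ≤ p-1 from hk2)
    have hcast := congrArg (fun m : ℕ => (m : ZMod p)) hid
    push_cast at hcast
    rw [choose_mod p k hk2, ZMod.wilsons_lemma] at hcast
    have hsq : ((-1:ZMod p))^k * ((-1:ZMod p))^k = 1 := by
      rw [← pow_add]
      exact Even.neg_one_pow ⟨k, rfl⟩
    calc (k ! : ZMod p) * ((p-1-k)! : ZMod p)
        = ((-1:ZMod p))^k * ((-1:ZMod p)^k * (k ! : ZMod p) * ((p-1-k)! : ZMod p)) := by
          rw [← mul_assoc, ← mul_assoc, hsq, one_mul]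
        _ = ((-1:ZMod p))^k * (-1) := by rw [hcast]
        _ = (-1)^(k+1) := by rw [pow_succ]
  have hne : (k ! : ZMod p) ≠ 0 := by
    rw [Ne, ZMod.natCast_eq_zero_iff]
    intro hdvd
    have := (Nat.Prime.dvd_factorial hpf.out).mp hdvd
    omega
  exact mul_left_cancel₀ hne (by rw [hfact, hfact2])

end ModP

/-- For every odd prime p, K_p = Σ_{n=0}^{p-1} n! ≡ Bell(p-1) - 1 (mod p). -/
theorem kurepa_bell_congruence (p : ℕ) (hp : p.Prime) (hodd : Odd p) :
    ((∑ n ∈ Finset.range p, n ! : ℕ) : ℤ) ≡ (bell (p - 1) : ℤ) - 1 [ZMOD p] := by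
  haveI : Fact p.Prime := ⟨hp⟩
  have hp2 : 2 ≤ p := hp.two_le
  apply (ZMod.intCast_eq_intCast_iff _ _ _).mp
  push_cast
  have hbell : ((bell (p-1) : ℕ) : ZMod p) = ∑ j ∈ range (p-1), ((j ! : ℕ) : ZMod p) := by
    rw [bell_eq]
    push_cast
    rw [Finset.sum_range_succ' (fun k => ((S2 (p-1) k : ℕ) : ZMod p)) (p-1)]
    have hz : S2 (p-1) 0 = 0 := by
      rw [show p - 1 = (p-2)+1 by omega, S2_zero_right]
    rw [hz]
    simp only [Nat.cast_zero, add_zero]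
    have hterm : ∀ k ∈ range (p-1), ((S2 (p-1) (k+1) : ℕ) : ZMod p)
        = (((p-1-1-k)! : ℕ) : ZMod p) := by
      intro k hk
      have hk' : k < p - 1 := Finset.mem_range.mp hk
      rw [S2_mod p (k+1) (by omega) (by omega)]
      congr 2
      omega
    rw [Finset.sum_congr rfl hterm]
    exact Finset.sum_range_reflect (fun j => ((j ! : ℕ) : ZMod p)) (p-1)
  have hK : ((∑ n ∈ range p, n ! : ℕ) : ZMod p)
      = ∑ j ∈ range (p-1), ((j ! : ℕ) : ZMod p) + (-1) := by
    push_cast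
    have hsplit := Finset.sum_range_succ (fun n => ((n ! : ℕ) : ZMod p)) (p-1)
    rw [show p-1+1 = p from by omega] at hsplit
    rw [hsplit, ZMod.wilsons_lemma]
  push_cast at hbell hK ⊢
  rw [hK, hbell]
  ring
end

section
/- For every prime p ≥ 3, the derangement number D_{p-1} satisfies D_{p-1} ≡ Σ_{k=0}^{p-1} k! (mod p). -/
open scoped Nat

lemma choose_sub_one_cast_eq (p : ℕ) (hp : p.Prime) :
    ∀ k, k ≤ p - 1 → (((p - 1).choose k : ZMod p)) = (-1) ^ k := by
  intro k
  induction k with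
  | zero => simp
  | succ k ih =>
    intro hk
    have hk' : k ≤ p - 1 := le_of_lt (Nat.lt_of_lt_of_le (Nat.lt_succ_self k) hk)
    have hsum : (p - 1).choose k + (p - 1).choose (k + 1) = p.choose (k + 1) := by
      have : p - 1 + 1 = p := Nat.succ_pred_eq_of_pos hp.pos
      rw [← this, Nat.choose_succ_succ]; simp
    have hdvd : p ∣ p.choose (k + 1) :=
      Nat.Prime.dvd_choose_self hp (Nat.succ_ne_zero k)
        (by omega)
    have hcast : ((p.choose (k + 1) : ZMod p)) = 0 :=
      (ZMod.natCast_eq_zero_iff _ _).mpr hdvd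
    have : ((p - 1).choose k : ZMod p) + ((p - 1).choose (k + 1) : ZMod p) = 0 := by
      rw [← Nat.cast_add, hsum, hcast]
    rw [ih hk'] at this
    have : ((p - 1).choose (k + 1) : ZMod p) = -(-1) ^ k := by linear_combination this
    rw [this, pow_succ]
    ring

/-- For every prime p ≥ 3, the derangement number D_{p-1} satisfies
    D_{p-1} ≡ Σ_{k=0}^{p-1} k! (mod p). -/
theorem derangement_left_factorial_congruence (p : ℕ) (hp : p.Prime) (h3 : 3 ≤ p) :
    numDerangements (p - 1) ≡ (∑ k ∈ Finset.range p, k !) [MOD p] := by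
  rw [← ZMod.natCast_eq_natCast_iff]
  have hup : p - 1 + 1 = p := Nat.succ_pred_eq_of_pos hp.pos
  have hD := numDerangements_sum (p - 1)
  have hDz : ((numDerangements (p - 1) : ℤ) : ZMod p) =
      ((∑ k ∈ Finset.range (p - 1 + 1), (-1 : ℤ) ^ k *
        Nat.ascFactorial (k + 1) (p - 1 - k) : ℤ) : ZMod p) := by rw [hD]
  rw [hup] at hDz
  push_cast at hDz
  rw [hDz]
  push_cast
  rw [show (∑ k ∈ Finset.range p, (k ! : ZMod p)) =
      ∑ k ∈ Finset.range p, ((p - 1 - k)! : ZMod p) from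
    (Finset.sum_range_reflect (fun k => ((k ! : ℕ) : ZMod p)) p).symm]
  apply Finset.sum_congr rfl
  intro k hk
  have hkp : k < p := Finset.mem_range.mp hk
  have hkle : k ≤ p - 1 := by omega
  -- asc factorial identity in ℕ
  have hasc : Nat.ascFactorial (k + 1) (p - 1 - k) = (p - 1).choose k * (p - 1 - k)! := by
    have h1 : k ! * Nat.ascFactorial (k + 1) (p - 1 - k) = (p - 1)! := by
      have := Nat.factorial_mul_ascFactorial k (p - 1 - k)
      rwa [Nat.add_sub_cancel' hkle] at this
    have h2 : k ! * ((p - 1).choose k * (p - 1 - k)!) = (p - 1)! := by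
      have := Nat.choose_mul_factorial_mul_factorial hkle
      linarith [this]
    exact Nat.eq_of_mul_eq_mul_left k.factorial_pos (h1.trans h2.symm)
  rw [hasc]
  push_cast
  rw [choose_sub_one_cast_eq p hp k hkle]
  rw [← mul_assoc, ← mul_pow]
  simp
end

section
/- For every odd prime p and every integer a with 1 ≤ a ≤ p-1, p divides a^{p-1} - 1, and the Fermat quotient q_p(a) = (a^{p-1} - 1)/p satisfies Σ_{a=1}^{p-1} q_p(a) ≡ W_p (mod p), where W_p = ((p-1)! + 1)/p is the Wilson quotient (Lerch's formula). -/
open scoped Nat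

private lemma one_add_pow_modeq (t : ℤ) (n : ℕ) :
    (1 + t) ^ n ≡ 1 + n * t [ZMOD t ^ 2] := by
  induction n with
  | zero => simp
  | succ n ih =>
    have : (1 + t) ^ (n + 1) = (1 + t) ^ n * (1 + t) := by ring
    rw [this]
    calc (1 + t) ^ n * (1 + t) ≡ (1 + n * t) * (1 + t) [ZMOD t ^ 2] :=
          ih.mul_right _
      _ ≡ 1 + (n + 1 : ℕ) * t [ZMOD t ^ 2] := by
          have : (1 + (n : ℤ) * t) * (1 + t) = (1 + ((n : ℤ) + 1) * t) + n * t ^ 2 := by ring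
          rw [this]
          push_cast
          simpa using (Int.modEq_iff_dvd.mpr ⟨-n, by ring⟩)

private lemma prod_one_add_modeq {α : Type*} (P : ℤ) (s : Finset α) (f : α → ℤ) :
    ∏ a ∈ s, (1 + P * f a) ≡ 1 + P * ∑ a ∈ s, f a [ZMOD P ^ 2] := by
  classical
  induction s using Finset.induction with
  | empty => simp
  | @insert x s hx ih =>
    rw [Finset.prod_insert hx, Finset.sum_insert hx]
    calc (1 + P * f x) * ∏ a ∈ s, (1 + P * f a)
        ≡ (1 + P * f x) * (1 + P * ∑ a ∈ s, f a) [ZMOD P ^ 2] := ih.mul_left _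
      _ ≡ 1 + P * (f x + ∑ a ∈ s, f a) [ZMOD P ^ 2] := by
          have : (1 + P * f x) * (1 + P * ∑ a ∈ s, f a)
              = (1 + P * (f x + ∑ a ∈ s, f a)) + (f x * ∑ a ∈ s, f a) * P ^ 2 := by ring
          rw [this]
          simpa using (Int.modEq_iff_dvd.mpr ⟨-(f x * ∑ a ∈ s, f a), by ring⟩)

/-- Lerch's formula: for every odd prime p, p divides a^{p-1} - 1 for
    1 ≤ a ≤ p-1, and Σ_{a=1}^{p-1} q_p(a) ≡ W_p (mod p) where
    q_p(a) = (a^{p-1}-1)/p and W_p = ((p-1)! + 1)/p is the Wilson quotient. -/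
theorem lerch_formula (p : ℕ) (hp : p.Prime) (hodd : Odd p) :
    (∀ a : ℕ, 1 ≤ a → a ≤ p - 1 → (p : ℤ) ∣ (a : ℤ) ^ (p - 1) - 1) ∧
    (∑ a ∈ Finset.Icc 1 (p - 1), ((a : ℤ) ^ (p - 1) - 1) / (p : ℤ)) ≡
      (((p - 1)! : ℤ) + 1) / (p : ℤ) [ZMOD p] := by
  haveI := Fact.mk hp
  have hp1 : 1 < p := hp.one_lt
  have hpz : (p : ℤ) ≠ 0 := by exact_mod_cast hp.ne_zero
  -- Fermat's little theorem part
  have fermat : ∀ a : ℕ, 1 ≤ a → a ≤ p - 1 → (p : ℤ) ∣ (a : ℤ) ^ (p - 1) - 1 := by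
    intro a h1 h2
    have ha : (a : ZMod p) ≠ 0 := by
      rw [Ne, ZMod.natCast_eq_zero_iff]
      intro hdvd
      have := Nat.le_of_dvd (by omega) hdvd
      omega
    have hpow := ZMod.pow_card_sub_one_eq_one ha
    rw [← ZMod.intCast_zmod_eq_zero_iff_dvd]
    push_cast
    rw [hpow]
    ring
  refine ⟨fermat, ?_⟩
  set q : ℕ → ℤ := fun a => ((a : ℤ) ^ (p - 1) - 1) / p with hq
  have hqeq : ∀ a ∈ Finset.Icc 1 (p - 1), (a : ℤ) ^ (p - 1) = 1 + (p : ℤ) * q a := by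
    intro a ha
    rw [Finset.mem_Icc] at ha
    have := Int.ediv_mul_cancel (fermat a ha.1 ha.2)
    simp only [hq]
    linarith [this]
  -- Wilson quotient
  have hwdvd : (p : ℤ) ∣ ((p - 1)! : ℤ) + 1 := by
    rw [← ZMod.intCast_zmod_eq_zero_iff_dvd]
    push_cast
    rw [ZMod.wilsons_lemma]
    ring
  set W : ℤ := (((p - 1)! : ℤ) + 1) / p with hW
  have hfact : ((p - 1)! : ℤ) = (p : ℤ) * W - 1 := by
    have := Int.ediv_mul_cancel hwdvd
    simp only [hW]
    linarith [this]
  -- product of a^(p-1) over Icc 1 (p-1)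
  have hprod : ∏ a ∈ Finset.Icc 1 (p - 1), (a : ℤ) ^ (p - 1) = ((p - 1)! : ℤ) ^ (p - 1) := by
    rw [Finset.prod_pow]
    congr 1
    rw [← Nat.cast_prod, ← Finset.Ico_add_one_right_eq_Icc, Finset.prod_Ico_id_eq_factorial]
  -- key congruence mod p^2
  have key1 : ((p - 1)! : ℤ) ^ (p - 1) ≡ 1 + (p : ℤ) * ∑ a ∈ Finset.Icc 1 (p - 1), q a
      [ZMOD (p : ℤ) ^ 2] := by
    rw [← hprod, Finset.prod_congr rfl hqeq]
    exact prod_one_add_modeq _ _ _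
  have hev : Even (p - 1) := Nat.Odd.sub_odd hodd odd_one
  have key2 : ((p - 1)! : ℤ) ^ (p - 1) ≡ 1 + (p : ℤ) * W [ZMOD (p : ℤ) ^ 2] := by
    have h1 : ((p - 1)! : ℤ) ^ (p - 1) = (1 + (-(p * W))) ^ (p - 1) := by
      rw [hfact]
      rw [← hev.neg_pow]
      ring_nf
    rw [h1]
    have h2 := one_add_pow_modeq (-(p * W)) (p - 1)
    have h3 : ((p : ℤ)) ^ 2 ∣ (-(p * W)) ^ 2 := ⟨W ^ 2, by ring⟩
    have h4 : (1 + -((p : ℤ) * W)) ^ (p - 1) ≡ 1 + (p - 1 : ℕ) * (-(p * W))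
        [ZMOD (p : ℤ) ^ 2] := h2.of_dvd h3
    refine h4.trans ?_
    have hcast : ((p - 1 : ℕ) : ℤ) = (p : ℤ) - 1 := by
      push_cast [Nat.cast_sub hp1.le]
      ring
    rw [hcast]
    have : 1 + ((p : ℤ) - 1) * (-(p * W)) = (1 + (p : ℤ) * W) + (-W) * (p : ℤ) ^ 2 := by ring
    rw [this]
    simpa using (Int.modEq_iff_dvd.mpr ⟨W, by ring⟩)
  -- combine
  have key3 : (p : ℤ) ^ 2 ∣ (p : ℤ) * W - (p : ℤ) * ∑ a ∈ Finset.Icc 1 (p - 1), q a := by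
    have := (key1.symm.trans key2).dvd
    simpa [add_sub_add_left_eq_sub] using this
  have key4 : (p : ℤ) ∣ W - ∑ a ∈ Finset.Icc 1 (p - 1), q a := by
    rcases key3 with ⟨c, hc⟩
    refine ⟨c, ?_⟩
    have : (p : ℤ) * (W - ∑ a ∈ Finset.Icc 1 (p - 1), q a) = (p : ℤ) * ((p:ℤ) * c) := by
      rw [mul_sub, hc]; ring
    exact mul_left_cancel₀ hpz this
  exact Int.modEq_iff_dvd.mpr key4
end

section
/- For every prime p ≥ 5, p(p+1)·B_{p-1} ≡ (p-1)! (mod p^2), where B_{p-1} is the (p-1)-st Bernoulli number, interpreted as a congruence of p-integral rational numbers. -/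
open scoped Nat
open Finset


/-- `x` is `p`-integral: it can be written with denominator prime to `p`. -/
def PInt (p : ℕ) (x : ℚ) : Prop := ∃ a b : ℤ, ¬ (p:ℤ) ∣ b ∧ x = a / b

namespace PInt

variable {p : ℕ} (hp : p.Prime)

theorem not_dvd_one (hp : p.Prime) : ¬ (p:ℤ) ∣ 1 := by
  intro h
  have := Int.le_of_dvd one_pos h
  have := hp.two_le
  omega

theorem intCast (hp : p.Prime) (n : ℤ) : PInt p (n : ℚ) :=
  ⟨n, 1, not_dvd_one hp, by simp⟩

theorem natCast (hp : p.Prime) (n : ℕ) : PInt p (n : ℚ) := intCast hp n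

theorem zero (hp : p.Prime) : PInt p 0 := by simpa using intCast hp 0

theorem one (hp : p.Prime) : PInt p 1 := by simpa using intCast hp 1

theorem add (hp : p.Prime) {x y : ℚ} (hx : PInt p x) (hy : PInt p y) :
    PInt p (x + y) := by
  obtain ⟨a, b, hb, rfl⟩ := hx
  obtain ⟨c, d, hd, rfl⟩ := hy
  refine ⟨a * d + c * b, b * d, ?_, ?_⟩
  · intro h
    rcases (Nat.prime_iff_prime_int.mp hp).dvd_mul.mp h with h | h <;> tauto
  · have hb0 : (b:ℚ) ≠ 0 := by
      intro h; exact hb (by rw [show b = 0 by exact_mod_cast h]; exact dvd_zero _)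
    have hd0 : (d:ℚ) ≠ 0 := by
      intro h; exact hd (by rw [show d = 0 by exact_mod_cast h]; exact dvd_zero _)
    push_cast
    field_simp

theorem mul (hp : p.Prime) {x y : ℚ} (hx : PInt p x) (hy : PInt p y) :
    PInt p (x * y) := by
  obtain ⟨a, b, hb, rfl⟩ := hx
  obtain ⟨c, d, hd, rfl⟩ := hy
  refine ⟨a * c, b * d, ?_, ?_⟩
  · intro h
    rcases (Nat.prime_iff_prime_int.mp hp).dvd_mul.mp h with h | h <;> tauto
  · push_cast; ring

theorem neg (hp : p.Prime) {x : ℚ} (hx : PInt p x) : PInt p (-x) := by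
  obtain ⟨a, b, hb, rfl⟩ := hx
  exact ⟨-a, b, hb, by push_cast; ring⟩

theorem sub (hp : p.Prime) {x y : ℚ} (hx : PInt p x) (hy : PInt p y) :
    PInt p (x - y) := by
  simpa [sub_eq_add_neg] using add hp hx (neg hp hy)

theorem sum (hp : p.Prime) {s : Finset ℕ} {f : ℕ → ℚ}
    (h : ∀ i ∈ s, PInt p (f i)) : PInt p (∑ i ∈ s, f i) := by
  classical
  induction s using Finset.induction_on with
  | empty => simpa using zero hp
  | insert _ _ hns ih =>
    rw [Finset.sum_insert hns]
    exact add hp (h _ (Finset.mem_insert_self _ _))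
      (ih fun i hi => h i (Finset.mem_insert_of_mem hi))

/-- From `p`-integrality to the denominator condition. -/
theorem not_dvd_den (hp : p.Prime) {x : ℚ} (hx : PInt p x) : ¬ p ∣ x.den := by
  obtain ⟨a, b, hb, rfl⟩ := hx
  intro h
  have hdvd : (((a:ℚ) / b).den : ℤ) ∣ b := by
    rw [← Rat.divInt_eq_div]
    exact Rat.den_dvd a b
  exact hb (dvd_trans (Int.natCast_dvd_natCast.mpr h) hdvd)

end PInt

theorem pow_div_pInt (hp : p.Prime) {e : ℕ} (he : 1 ≤ e) :
    PInt p ((p:ℚ)^(e-1) / (e:ℚ)) := by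
  haveI : Fact p.Prime := ⟨hp⟩
  set a := padicValNat p e with ha
  have he0 : e ≠ 0 := by omega
  obtain ⟨e', he'⟩ : p ^ a ∣ e := pow_padicValNat_dvd
  have hpe' : ¬ p ∣ e' := by
    intro h
    have hd : p ^ (a+1) ∣ e := by
      rw [he', pow_succ]
      exact mul_dvd_mul_left _ h
    exact pow_succ_padicValNat_not_dvd he0 hd
  have hae : a < e := by
    calc a < p ^ a := Nat.lt_pow_self hp.one_lt
    _ ≤ e := Nat.le_of_dvd (by omega) ⟨e', he'⟩
  refine ⟨(p:ℤ)^(e-1-a), (e':ℤ), fun h => hpe' (by exact_mod_cast h), ?_⟩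
  have hp0 : (p:ℚ) ≠ 0 := by exact_mod_cast hp.pos.ne'
  have he'0 : (e':ℚ) ≠ 0 := by
    intro h
    exact hpe' (by rw [show e' = 0 by exact_mod_cast h]; exact dvd_zero _)
  have hecast : (e:ℚ) = (p:ℚ)^a * e' := by exact_mod_cast he'
  rw [hecast]
  push_cast
  rw [div_eq_div_iff (by positivity) (by positivity)]
  rw [← mul_assoc, ← pow_add, show e-1-a+a = e-1 from by omega]

theorem pBernoulli_pInt (hp : p.Prime) : ∀ m : ℕ, PInt p ((p:ℚ) * bernoulli m) := by
  intro m
  induction m using Nat.strong_induction_on with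
  | _ m ih =>
  have key := sum_range_pow p m
  have hterm : ∀ i ∈ Finset.range (m+1),
      bernoulli i * (((m + 1).choose i : ℕ) : ℚ) * (p:ℚ)^(m+1-i) / ((m:ℚ)+1)
        = bernoulli i * ((m.choose i : ℕ) : ℚ) * (p:ℚ)^(m+1-i) / ((m+1-i : ℕ) : ℚ) := by
    intro i hi
    have hi' : i ≤ m := by simpa [Nat.lt_succ_iff] using hi
    have h1 : ((m:ℚ)+1) ≠ 0 := by positivity
    have h2 : ((m+1-i:ℕ):ℚ) ≠ 0 := by
      have h3 : 0 < m+1-i := by omega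
      exact_mod_cast h3.ne'
    have hcq : ((m.choose i : ℕ) : ℚ) * ((m:ℚ)+1)
        = (((m+1).choose i : ℕ) : ℚ) * ((m+1-i:ℕ):ℚ) := by
      exact_mod_cast congrArg (Nat.cast (R := ℚ)) (Nat.choose_mul_succ_eq m i)
    rw [div_eq_div_iff h1 h2]
    linear_combination (-(bernoulli i * (p:ℚ)^(m+1-i))) * hcq
  rw [Finset.sum_congr rfl hterm, Finset.sum_range_succ] at key
  have hlast : bernoulli m * ((m.choose m : ℕ):ℚ) * (p:ℚ)^(m+1-m) / ((m+1-m:ℕ):ℚ)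
      = (p:ℚ) * bernoulli m := by
    rw [show m+1-m = 1 from by omega]
    simp [Nat.choose_self]
    ring
  rw [hlast] at key
  have hS : PInt p (∑ k ∈ Finset.range p, (k:ℚ)^m) := by
    have : (∑ k ∈ Finset.range p, (k:ℚ)^m) = (((∑ k ∈ Finset.range p, k^m : ℕ)) : ℚ) := by
      push_cast; ring
    rw [this]; exact PInt.natCast hp _
  have hrest : PInt p (∑ i ∈ Finset.range m,
      bernoulli i * ((m.choose i : ℕ) : ℚ) * (p:ℚ)^(m+1-i) / ((m+1-i : ℕ) : ℚ)) := by
    apply PInt.sum hp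
    intro i hi
    have hilt : i < m := Finset.mem_range.mp hi
    have he1 : 1 ≤ m+1-i := by omega
    have hgi : bernoulli i * ((m.choose i : ℕ) : ℚ) * (p:ℚ)^(m+1-i) / ((m+1-i : ℕ) : ℚ)
        = ((p:ℚ) * bernoulli i) * ((m.choose i : ℕ) : ℚ)
          * ((p:ℚ)^((m+1-i)-1) / ((m+1-i:ℕ):ℚ)) := by
      rw [show (p:ℚ)^(m+1-i) = (p:ℚ)^((m+1-i)-1) * p by
        rw [← pow_succ, show (m+1-i)-1+1 = m+1-i from by omega]]
      ring
    rw [hgi]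
    exact PInt.mul hp (PInt.mul hp (ih i hilt) (PInt.natCast hp _)) (pow_div_pInt hp he1)
  have : (p:ℚ) * bernoulli m
      = (∑ k ∈ Finset.range p, (k:ℚ)^m) - ∑ i ∈ Finset.range m,
        bernoulli i * ((m.choose i : ℕ) : ℚ) * (p:ℚ)^(m+1-i) / ((m+1-i : ℕ) : ℚ) := by
    rw [key]; ring
  rw [this]
  exact PInt.sub hp hS hrest

theorem sum_psq (hp : p.Prime) {s : Finset ℕ} {f : ℕ → ℚ}
    (h : ∀ i ∈ s, ∃ u : ℚ, PInt p u ∧ f i = (p:ℚ)^2 * u) :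
    ∃ u : ℚ, PInt p u ∧ ∑ i ∈ s, f i = (p:ℚ)^2 * u := by
  classical
  induction s using Finset.induction_on with
  | empty => exact ⟨0, PInt.zero hp, by simp⟩
  | @insert a s' hns ih =>
    obtain ⟨u, hu, hfu⟩ := h a (Finset.mem_insert_self _ _)
    obtain ⟨v, hv, hfv⟩ := ih fun i hi => h i (Finset.mem_insert_of_mem hi)
    exact ⟨u + v, PInt.add hp hu hv, by rw [Finset.sum_insert hns, hfu, hfv]; ring⟩

theorem bern_sum (hp : p.Prime) (h5 : 5 ≤ p) :
    ∃ r : ℚ, PInt p r ∧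
      (p:ℚ) * bernoulli (p-1) - (∑ k ∈ Finset.range p, (k:ℚ)^(p-1)) = (p:ℚ)^2 * r := by
  obtain ⟨m, rfl⟩ : ∃ m, p = m + 1 := ⟨p - 1, by omega⟩
  have hm4 : 4 ≤ m := by omega
  simp only [Nat.add_sub_cancel]
  have key := sum_range_pow (m+1) m
  conv at key => rhs; rw [Finset.sum_range_succ]
  have hmp : ((m:ℚ)+1) = ((m+1:ℕ):ℚ) := by push_cast; ring
  have hlast : bernoulli m * (((m+1).choose m : ℕ):ℚ) * ((m+1:ℕ):ℚ)^(m+1-m) / ((m:ℚ)+1)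
      = ((m+1:ℕ):ℚ) * bernoulli m := by
    rw [show m+1-m = 1 from by omega, Nat.choose_succ_self_right, hmp]
    have : ((m+1:ℕ):ℚ) ≠ 0 := by positivity
    field_simp
  rw [hlast] at key
  have hterm : ∀ i ∈ Finset.range m, ∃ u : ℚ, PInt (m+1) u ∧
      bernoulli i * (((m+1).choose i : ℕ):ℚ) * ((m+1:ℕ):ℚ)^(m+1-i) / ((m:ℚ)+1)
        = ((m+1:ℕ):ℚ)^2 * u := by
    intro i hi
    have hilt : i < m := Finset.mem_range.mp hi
    set P : ℚ := ((m+1:ℕ):ℚ) with hP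
    have hP0 : P ≠ 0 := by rw [hP]; positivity
    have hsimp : bernoulli i * (((m+1).choose i : ℕ):ℚ) * P^(m+1-i) / ((m:ℚ)+1)
        = bernoulli i * (((m+1).choose i : ℕ):ℚ) * P^(m-i) := by
      rw [hmp, show m+1-i = (m-i)+1 from by omega, pow_succ]
      field_simp
    rw [hsimp]
    rcases Nat.eq_zero_or_pos i with hi0 | hi1
    · subst hi0
      refine ⟨P^(m-2), ?_, ?_⟩
      · have : P^(m-2) = (((m+1)^(m-2) : ℕ) : ℚ) := by rw [hP]; push_cast; ring
        rw [this]; exact PInt.natCast hp _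
      · simp only [bernoulli_zero, Nat.choose_zero_right, Nat.cast_one, one_mul]
        rw [← pow_add, show 2 + (m-2) = m - 0 from by omega]
    rcases eq_or_ne i (m-1) with him | him
    · refine ⟨0, PInt.zero hp, ?_⟩
      have hodd : Odd i := by
        have : Odd (m+1) := hp.odd_of_ne_two (by omega)
        rw [him]
        rcases this with ⟨c, hc⟩
        exact ⟨c - 1, by omega⟩
      have : bernoulli i = 0 := by
        rw [bernoulli_eq_bernoulli'_of_ne_one (by omega)]
        exact bernoulli'_eq_zero_of_odd hodd (by omega)
      rw [this]; ring
    · -- 0 < i ≤ m-2, use (m+1) ∣ choose (m+1) i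
      have hile : i ≤ m - 2 := by omega
      obtain ⟨c, hc⟩ : (m+1) ∣ (m+1).choose i :=
        hp.dvd_choose_self (by omega) (by omega)
      obtain ⟨d, hd⟩ : ∃ d, m - i = d + 2 := ⟨m - i - 2, by omega⟩
      refine ⟨(P * bernoulli i) * (c:ℚ) * P^d, ?_, ?_⟩
      · exact PInt.mul hp (PInt.mul hp (pBernoulli_pInt hp i) (PInt.natCast hp _))
          (by
            have hPd : P^d = (((m+1)^d : ℕ) : ℚ) := by rw [hP]; push_cast; ring
            rw [hPd]; exact PInt.natCast hp _)
      · rw [hc, hd]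
        push_cast [← hP]
        ring
  obtain ⟨u, hu, hsum⟩ := sum_psq hp hterm
  refine ⟨-u, PInt.neg hp hu, ?_⟩
  rw [key, hsum]
  ring

theorem prod_one_add (c : ℤ) (s : Finset ℕ) (f : ℕ → ℤ) :
    ∃ t : ℤ, ∏ k ∈ s, (1 + c * f k) = 1 + c * ∑ k ∈ s, f k + c^2 * t := by
  classical
  induction s using Finset.induction_on with
  | empty => exact ⟨0, by simp⟩
  | @insert a s' hns ih =>
    obtain ⟨t, ht⟩ := ih
    refine ⟨t + f a * ∑ k ∈ s', f k + c * f a * t, ?_⟩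
    rw [Finset.prod_insert hns, Finset.sum_insert hns, ht]
    ring

theorem one_add_pow (c : ℤ) (n : ℕ) : ∃ t : ℤ, (1+c)^n = 1 + n*c + c^2*t := by
  induction n with
  | zero => exact ⟨0, by simp⟩
  | succ n ih =>
    obtain ⟨t, ht⟩ := ih
    exact ⟨t + n + c*t, by rw [pow_succ, ht]; push_cast; ring⟩

theorem lerch (hp : p.Prime) (h5 : 5 ≤ p) :
    ∃ w j : ℤ, (((p-1)! : ℕ) : ℤ) = -1 + p * w ∧
      (∑ k ∈ Finset.range p, (k:ℤ)^(p-1)) = (((p-1)! : ℕ) : ℤ) + p + p^2 * j := by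
  haveI : Fact p.Prime := ⟨hp⟩
  have hp0 : (p:ℤ) ≠ 0 := by exact_mod_cast hp.pos.ne'
  have hwil : (p:ℤ) ∣ (((p-1)! : ℕ) : ℤ) + 1 := by
    have h := ZMod.wilsons_lemma (p := p)
    rw [← ZMod.intCast_zmod_eq_zero_iff_dvd]
    push_cast
    rw [h]
    ring
  obtain ⟨w, hw⟩ := hwil
  have hferm : ∀ k ∈ Finset.Ico 1 p, (p:ℤ) ∣ (k:ℤ)^(p-1) - 1 := by
    intro k hk
    rw [Finset.mem_Ico] at hk
    have hndvd : ¬ p ∣ k := fun h => by have := Nat.le_of_dvd (by omega) h; omega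
    have h0 : ((k:ℕ) : ZMod p) ≠ 0 := by
      rw [Ne, ZMod.natCast_eq_zero_iff]; exact hndvd
    have h1 : ((k : ZMod p))^(p-1) = 1 := ZMod.pow_card_sub_one_eq_one h0
    rw [← ZMod.intCast_zmod_eq_zero_iff_dvd]
    push_cast
    rw [h1]
    ring
  set q : ℕ → ℤ := fun k => ((k:ℤ)^(p-1) - 1) / p with hq
  have hqk : ∀ k ∈ Finset.Ico 1 p, (k:ℤ)^(p-1) = 1 + (p:ℤ) * q k := by
    intro k hk
    have h2 := Int.mul_ediv_cancel' (hferm k hk)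
    rw [hq]
    simp only []
    linarith
  obtain ⟨t2, ht2⟩ := prod_one_add (p:ℤ) (Finset.Ico 1 p) q
  have hfact : (∏ k ∈ Finset.Ico 1 p, (k:ℤ)) = (((p-1)! : ℕ) : ℤ) := by
    rw [← Nat.cast_prod]
    congr 1
    have h := Finset.prod_Ico_id_eq_factorial (p-1)
    rwa [show p-1+1 = p from by omega] at h
  have hprodW : (((p-1)! : ℕ) : ℤ) ^ (p-1)
      = 1 + (p:ℤ) * (∑ k ∈ Finset.Ico 1 p, q k) + (p:ℤ)^2 * t2 := by
    rw [← ht2, ← hfact, ← Finset.prod_pow]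
    exact Finset.prod_congr rfl hqk
  have heven : Even (p-1) := by
    obtain ⟨c, hc⟩ := hp.odd_of_ne_two (by omega)
    exact ⟨c, by omega⟩
  obtain ⟨t, ht⟩ := one_add_pow (-((p:ℤ)*w)) (p-1)
  have hcast : ((p-1:ℕ):ℤ) = (p:ℤ) - 1 := by
    push_cast [Nat.cast_sub (show 1 ≤ p by omega)]
    ring
  have hWpow : (((p-1)! : ℕ) : ℤ) ^ (p-1)
      = 1 + ((p:ℤ) - 1) * (-((p:ℤ)*w)) + ((p:ℤ)*w)^2 * t := by
    have hWe : (((p-1)! : ℕ) : ℤ) = -(1 + -((p:ℤ)*w)) := by linarith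
    rw [hWe, heven.neg_pow, ht, hcast]
    ring
  have hE := hprodW.symm.trans hWpow
  have h2 : (p:ℤ) * (∑ k ∈ Finset.Ico 1 p, q k)
      = (p:ℤ) * (w + p * (w^2*t - w - t2)) := by
    linear_combination hE
  have hQval : (∑ k ∈ Finset.Ico 1 p, q k) = w + p * (w^2*t - w - t2) :=
    mul_left_cancel₀ hp0 h2
  have hcard : (Finset.Ico 1 p).card = p - 1 := by simp
  have hsum : (∑ k ∈ Finset.Ico 1 p, (k:ℤ)^(p-1))
      = ((p-1:ℕ):ℤ) + (p:ℤ) * (∑ k ∈ Finset.Ico 1 p, q k) := by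
    rw [Finset.sum_congr rfl hqk, Finset.sum_add_distrib, Finset.sum_const, hcard,
      Finset.mul_sum]
    simp [Finset.mul_sum]
  have hrange : (∑ k ∈ Finset.range p, (k:ℤ)^(p-1))
      = ∑ k ∈ Finset.Ico 1 p, (k:ℤ)^(p-1) := by
    rw [Finset.range_eq_Ico, Finset.sum_eq_sum_Ico_succ_bot (show 0 < p by omega)]
    simp [show p - 1 ≠ 0 from by omega]
  refine ⟨w, w^2*t - w - t2, by linarith, ?_⟩
  rw [hrange, hsum, hQval, hcast]
  linear_combination (-1 : ℤ) * hw


/-- Carlitz's congruence: for every prime p ≥ 5,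
    p(p+1)·B_{p-1} ≡ (p-1)! (mod p²) as p-integral rationals; i.e. the
    difference is p² times a p-integral rational (one whose denominator is
    not divisible by p). -/
theorem carlitz_congruence (p : ℕ) (hp : p.Prime) (h5 : 5 ≤ p) :
    ∃ r : ℚ, (p : ℚ) * ((p : ℚ) + 1) * bernoulli (p - 1) - ((p - 1)! : ℚ) =
      (p : ℚ)^2 * r ∧ ¬ (p ∣ r.den) := by
  obtain ⟨r₁, hr₁, hA⟩ := bern_sum hp h5
  obtain ⟨w, j, hw, hS⟩ := lerch hp h5
  have hScast : (∑ k ∈ Finset.range p, (k:ℚ)^(p-1))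
      = (((p-1)! : ℕ) : ℚ) + (p:ℚ) + (p:ℚ)^2 * (j:ℚ) := by
    have h := congrArg (fun z : ℤ => (z : ℚ)) hS
    push_cast at h
    exact h
  have hwq : (((p-1)! : ℕ) : ℚ) = -1 + (p:ℚ) * (w:ℚ) := by
    have h := congrArg (fun z : ℤ => (z : ℚ)) hw
    push_cast at h
    exact h
  have hG : (p:ℚ) * bernoulli (p-1)
      = (((p-1)! : ℕ) : ℚ) + (p:ℚ) + (p:ℚ)^2 * ((j:ℚ) + r₁) := by
    linear_combination hA + hScast
  refine ⟨(w:ℚ) + 1 + ((j:ℚ) + r₁) * (1 + (p:ℚ)), ?_, ?_⟩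
  · linear_combination ((p:ℚ)+1) * hG + (p:ℚ) * hwq
  · apply PInt.not_dvd_den hp
    exact PInt.add hp (PInt.add hp (PInt.intCast hp w) (PInt.one hp))
      (PInt.mul hp (PInt.add hp (PInt.intCast hp j) hr₁)
        (PInt.add hp (PInt.one hp) (PInt.natCast hp p)))
end

section
/- For every prime p ≥ 5, the Wilson quotient satisfies W_p ≡ B_{p-1} + 1/p - 1 (mod p), where W_p = ((p-1)! + 1)/p and B_{p-1} is the (p-1)-st Bernoulli number, the congruence being between p-integral rational numbers (note B_{p-1} + 1/p is p-integral by von Staudt–Clausen). -/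
open scoped Nat

open Finset


lemma sq_zero_pow {R : Type*} [CommRing R] (a x : R) (hx : x^2 = 0) (n : ℕ) :
    (a + x)^(n+1) = a^(n+1) + (n+1) * a^n * x := by
  induction n with
  | zero => ring
  | succ n ih =>
    have h1 : (a + x)^(n+2) = (a + x)^(n+1) * (a+x) := by ring
    rw [h1, ih]
    push_cast
    linear_combination (((n:R)+1) * a^n) * hx

lemma prod_one_add_s16 {R : Type*} [CommRing R] {ι : Type*} (s : Finset ι)
    (x : R) (hx : x^2 = 0) (f : ι → R) :
    ∏ i ∈ s, (1 + x * f i) = 1 + x * ∑ i ∈ s, f i := by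
  classical
  induction s using Finset.induction_on with
  | empty => simp
  | @insert a s h ih =>
    rw [Finset.prod_insert h, Finset.sum_insert h, ih]
    linear_combination (f a * ∑ i ∈ s, f i) * hx

lemma key_int (p : ℕ) (hp : p.Prime) (h5 : 5 ≤ p) :
    ((p:ℤ))^2 ∣ (∑ k ∈ range p, (k:ℤ)^(p-1)) - (((p-1)! : ℤ) + p) := by
  haveI : Fact p.Prime := ⟨hp⟩
  obtain ⟨W, hW⟩ : (p:ℤ) ∣ ((p-1)! : ℤ) + 1 := by
    rw [← ZMod.intCast_zmod_eq_zero_iff_dvd]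
    push_cast
    rw [ZMod.wilsons_lemma]
    ring
  set q : ℕ → ℤ := fun k => ((k:ℤ)^(p-1) - 1) / p with hqdef
  have hq : ∀ k ∈ Ico 1 p, (p:ℤ) * q k = (k:ℤ)^(p-1) - 1 := by
    intro k hk
    rw [Finset.mem_Ico] at hk
    apply Int.mul_ediv_cancel'
    rw [← ZMod.intCast_zmod_eq_zero_iff_dvd]
    push_cast
    rw [ZMod.pow_card_sub_one_eq_one, sub_self]
    rw [Ne, ZMod.natCast_eq_zero_iff]
    intro hd
    have := Nat.le_of_dvd (by omega) hd
    omega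
  set R := ZMod (p^2) with hR
  have hx : (p : R)^2 = 0 := by
    have := ZMod.natCast_self (p^2)
    push_cast at this
    exact this
  suffices h : (((∑ k ∈ range p, (k:ℤ)^(p-1)) - (((p-1)! : ℤ) + p) : ℤ) : R) = 0 by
    have := (ZMod.intCast_zmod_eq_zero_iff_dvd _ (p^2)).mp h
    push_cast at this
    exact this
  push_cast (config := {zetaDelta := true})
  have hp1 : p - 1 + 1 = p := by omega
  have hpow : ∀ k ∈ Ico 1 p, (k:R)^(p-1) = 1 + (p:R) * (q k : R) := by
    intro k hk
    have := congrArg (fun z : ℤ => (z : R)) (hq k hk)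
    push_cast (config := {zetaDelta := true}) at this
    linear_combination -this
  have hfact : ((p-1)! : R) = (p:R) * (W : R) - 1 := by
    have := congrArg (fun z : ℤ => (z : R)) hW
    push_cast (config := {zetaDelta := true}) at this
    linear_combination this
  have hsplit : ∑ k ∈ range p, (k:R)^(p-1) =
      ((p-1 : ℕ) : R) + (p:R) * ∑ k ∈ Ico 1 p, (q k : R) := by
    rw [Finset.range_eq_Ico, Finset.sum_eq_sum_Ico_succ_bot (by omega : 0 < p)]
    rw [Finset.sum_congr rfl hpow]
    rw [Finset.sum_add_distrib, ← Finset.mul_sum, Finset.sum_const, Nat.card_Ico]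
    push_cast
    rw [zero_pow (by omega : p - 1 ≠ 0)]
    ring
  have hprod : 1 + (p:R) * ∑ k ∈ Ico 1 p, (q k : R) = 1 + (p:R) * (W:R) := by
    calc 1 + (p:R) * ∑ k ∈ Ico 1 p, (q k : R)
        = ∏ k ∈ Ico 1 p, (1 + (p:R) * (q k : R)) := (prod_one_add_s16 _ _ hx _).symm
      _ = ∏ k ∈ Ico 1 p, (k:R)^(p-1) := (Finset.prod_congr rfl hpow).symm
      _ = (∏ k ∈ Ico 1 p, (k:R))^(p-1) := by rw [Finset.prod_pow]
      _ = ((p-1)! : R)^(p-1) := by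
          have hnat : ∏ i ∈ Ico 1 p, i = (p-1)! := by
            have := Finset.prod_Ico_id_eq_factorial (p-1)
            rwa [hp1] at this
          rw [← Nat.cast_prod, hnat]
      _ = (-1 + (p:R) * (W:R))^(p-2+1) := by
          rw [hfact]
          congr 1
          · ring
          · omega
      _ = (-1)^(p-2+1) + (((p-2:ℕ):R)+1) * (-1)^(p-2) * ((p:R) * (W:R)) := by
          apply sq_zero_pow
          rw [mul_pow, hx, zero_mul]
      _ = 1 + (p:R) * (W:R) := by
          have hodd : Odd p := hp.odd_of_ne_two (by omega)
          have h1 : Odd (p - 2) := Nat.Odd.sub_even (by omega) hodd (by decide)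
          have h2 : Even (p - 2 + 1) := Odd.add_one h1
          rw [h2.neg_one_pow, h1.neg_one_pow]
          have : ((p - 2 : ℕ) : R) = (p : R) - 2 := by
            push_cast [Nat.cast_sub (by omega : 2 ≤ p)]; ring
          rw [this]
          linear_combination (-(W:R)) * hx
  have hQ : (p:R) * ∑ k ∈ Ico 1 p, (q k : R) = (p:R) * (W:R) := by
    exact add_left_cancel hprod
  rw [hsplit, hQ, hfact]
  have hc : ((p-1:ℕ):R) = (p:R) - 1 := by
    push_cast [Nat.cast_sub (by omega : 1 ≤ p)]
    ring
  rw [hc]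
  ring

section norms
variable {p : ℕ} [hp : Fact p.Prime]

lemma pnorm_mul_le_one {a b : ℚ} (ha : padicNorm p a ≤ 1) (hb : padicNorm p b ≤ 1) :
    padicNorm p (a * b) ≤ 1 := by
  rw [padicNorm.mul]
  calc padicNorm p a * padicNorm p b ≤ 1 * 1 :=
        mul_le_mul ha hb (padicNorm.nonneg b) zero_le_one
    _ = 1 := one_mul 1

lemma pnorm_sub_le {a b t : ℚ} (ha : padicNorm p a ≤ t) (hb : padicNorm p b ≤ t) :
    padicNorm p (a - b) ≤ t := by
  rw [sub_eq_add_neg]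
  refine le_trans padicNorm.nonarchimedean (max_le ha ?_)
  rwa [padicNorm.neg]

lemma pnorm_nat_ne_dvd {n : ℕ} (h : ¬ p ∣ n) : padicNorm p ((n:ℚ))⁻¹ = 1 := by
  rw [← one_div, padicNorm.div, padicNorm.one, (padicNorm.nat_eq_one_iff n).mpr h]
  norm_num

end norms

lemma sum_pow_dvd (p : ℕ) (hp : p.Prime) (i : ℕ) (hi : i < p - 1) :
    (p:ℤ) ∣ ∑ k ∈ range p, (k:ℤ)^i := by
  haveI : Fact p.Prime := ⟨hp⟩
  haveI : NeZero p := ⟨hp.ne_zero⟩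
  rw [← ZMod.intCast_zmod_eq_zero_iff_dvd]
  push_cast
  have h1 : ∑ k ∈ range p, ((k:ZMod p))^i = ∑ x : ZMod p, x^i :=
    Finset.sum_nbij' (fun k => ((k : ZMod p))) (fun x => x.val)
      (fun a _ => Finset.mem_univ _)
      (fun x _ => Finset.mem_range.mpr (ZMod.val_lt x))
      (fun a ha => ZMod.val_cast_of_lt (Finset.mem_range.mp ha))
      (fun x _ => ZMod.natCast_rightInverse x)
      (fun a _ => rfl)
  rw [h1, FiniteField.sum_pow_lt_card_sub_one]
  rwa [ZMod.card]

lemma bernoulli_pnorm_le_one (p : ℕ) (hp : p.Prime) (h5 : 5 ≤ p) :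
    ∀ i, i ≤ p - 2 → padicNorm p (bernoulli i) ≤ 1 := by
  haveI : Fact p.Prime := ⟨hp⟩
  have hp0 : (0:ℚ) < (p:ℚ)⁻¹ := by
    rw [inv_pos]; exact_mod_cast hp.pos
  intro i
  induction i using Nat.strong_induction_on with
  | _ i ih =>
    intro hi
    have hF := sum_range_pow p i
    rw [Finset.sum_range_succ] at hF
    have hlast : bernoulli i * (((i+1).choose i : ℕ):ℚ) * (p:ℚ)^(i+1-i) / ((i:ℚ)+1)
        = bernoulli i * p := by
      rw [Nat.choose_succ_self_right]
      have h2 : i + 1 - i = 1 := by omega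
      rw [h2, pow_one]
      have : ((i:ℚ)+1) ≠ 0 := by positivity
      field_simp
      push_cast
      ring
    have hkey : bernoulli i * p = (∑ k ∈ range p, (k:ℚ)^i)
        - ∑ j ∈ range i, bernoulli j * (((i+1).choose j : ℕ):ℚ) * (p:ℚ)^(i+1-j) / ((i:ℚ)+1) := by
      push_cast at hF hlast ⊢
      linear_combination -hF - hlast
    have hnorm : padicNorm p (bernoulli i * p) ≤ (p:ℚ)⁻¹ := by
      rw [hkey]
      apply pnorm_sub_le
      · -- the power sum is divisible by p
        obtain ⟨m, hm⟩ := sum_pow_dvd p hp i (by omega)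
        have hcast : (∑ k ∈ range p, (k:ℚ)^i) = (p:ℚ) * (m:ℚ) := by
          have := congrArg (fun z : ℤ => (z:ℚ)) hm
          push_cast at this
          convert this using 2
        rw [hcast, padicNorm.mul, padicNorm.padicNorm_p_of_prime]
        calc (p:ℚ)⁻¹ * padicNorm p (m:ℚ) ≤ (p:ℚ)⁻¹ * 1 := by
              exact mul_le_mul_of_nonneg_left (padicNorm.of_int m) (le_of_lt hp0)
          _ = (p:ℚ)⁻¹ := mul_one _
      · apply padicNorm.sum_le' _ (le_of_lt hp0)
        intro j hj
        have hji : j < i := Finset.mem_range.mp hj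
        have hterm : bernoulli j * (((i+1).choose j : ℕ):ℚ) * (p:ℚ)^(i+1-j) / ((i:ℚ)+1)
            = (bernoulli j * (((i+1).choose j : ℕ):ℚ) * (p:ℚ)^(i-j) * ((i:ℚ)+1)⁻¹) * p := by
          have h3 : i + 1 - j = (i - j) + 1 := by omega
          rw [h3, pow_succ]
          field_simp
        rw [hterm, padicNorm.mul, padicNorm.padicNorm_p_of_prime]
        have hA : padicNorm p (bernoulli j * (((i+1).choose j : ℕ):ℚ) * (p:ℚ)^(i-j) * ((i:ℚ)+1)⁻¹) ≤ 1 := by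
          apply pnorm_mul_le_one
          apply pnorm_mul_le_one
          apply pnorm_mul_le_one
          · exact ih j hji (by omega)
          · exact padicNorm.of_nat _
          · have : ((p:ℚ))^(i-j) = (((p^(i-j) : ℕ)):ℚ) := by push_cast; ring
            rw [this]; exact padicNorm.of_nat _
          · have : ((i:ℚ)+1) = (((i+1 : ℕ)):ℚ) := by push_cast; ring
            rw [this]
            exact le_of_eq (pnorm_nat_ne_dvd (by
              intro hd
              have := Nat.le_of_dvd (by omega) hd
              omega))
        calc padicNorm p _ * (p:ℚ)⁻¹ ≤ 1 * (p:ℚ)⁻¹ :=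
              mul_le_mul_of_nonneg_right hA (le_of_lt hp0)
          _ = (p:ℚ)⁻¹ := one_mul _
    rw [padicNorm.mul, padicNorm.padicNorm_p_of_prime] at hnorm
    calc padicNorm p (bernoulli i) = padicNorm p (bernoulli i) * (p:ℚ)⁻¹ * (p:ℚ) := by
          field_simp
      _ ≤ (p:ℚ)⁻¹ * (p:ℚ) := mul_le_mul_of_nonneg_right hnorm (by positivity)
      _ = 1 := by field_simp

lemma not_dvd_den_of_pnorm_le_one {p : ℕ} [hp : Fact p.Prime] {r : ℚ}
    (h : padicNorm p r ≤ 1) : ¬ p ∣ r.den := by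
  intro hd
  have hp1 : 1 < p := hp.out.one_lt
  have hr0 : r ≠ 0 := by
    intro h0
    rw [h0] at hd
    simp only [Rat.den_ofNat] at hd
    exact absurd (Nat.dvd_one.mp hd) (by omega)
  have hnum : ¬ (p ∣ r.num.natAbs) := by
    intro hn
    have := Nat.dvd_gcd hn hd
    rw [r.reduced.gcd_eq_one] at this
    exact absurd (Nat.dvd_one.mp this) (by omega)
  have hv : padicValRat p r ≤ -1 := by
    rw [padicValRat_def]
    have h1 : padicValInt p r.num = 0 := padicValNat.eq_zero_of_not_dvd hnum
    have h2 : 1 ≤ padicValNat p r.den := one_le_padicValNat_of_dvd r.den_nz hd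
    omega
  have := padicNorm.eq_zpow_of_nonzero (p := p) hr0
  rw [this] at h
  have hgt : (1:ℚ) < (p:ℚ) ^ (-padicValRat p r) := by
    apply one_lt_zpow₀ (by exact_mod_cast hp1)
    omega
  linarith

/-- Glaisher–Beeger congruence: for every prime p ≥ 5, the Wilson quotient
    W_p = ((p-1)! + 1)/p satisfies W_p ≡ B_{p-1} + 1/p - 1 (mod p), as a
    congruence of p-integral rationals: the difference is p times a rational
    whose denominator is not divisible by p. -/
theorem glaisher_beeger_congruence (p : ℕ) (hp : p.Prime) (h5 : 5 ≤ p) :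
    ∃ r : ℚ, (((p - 1)! : ℚ) + 1) / (p : ℚ) -
        (bernoulli (p - 1) + 1 / (p : ℚ) - 1) = (p : ℚ) * r ∧ ¬ (p ∣ r.den) := by
  haveI : Fact p.Prime := ⟨hp⟩
  have hp0 : (p:ℚ) ≠ 0 := by exact_mod_cast hp.ne_zero
  have hp1 : p - 1 + 1 = p := by omega
  obtain ⟨m, hm⟩ := key_int p hp h5
  have hS : (∑ k ∈ range p, (k:ℚ)^(p-1)) = ((p-1)! : ℚ) + p + p^2 * m := by
    have := congrArg (fun z:ℤ => (z:ℚ)) hm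
    push_cast at this
    linear_combination this
  -- Faulhaber
  have hF := sum_range_pow p (p-1)
  rw [hp1] at hF
  have hD : ((p-1 : ℕ):ℚ) + 1 = (p:ℚ) := by
    push_cast [Nat.cast_sub (by omega : 1 ≤ p)]
    ring
  rw [hD] at hF
  have hsplit := Finset.sum_range_succ
    (fun i => bernoulli i * ((p.choose i : ℕ):ℚ) * (p:ℚ)^(p-i) / p) (p-1)
  rw [hp1] at hsplit
  rw [hsplit] at hF
  have hchoose : p.choose (p-1) = p := by
    rw [Nat.choose_symm (show 1 ≤ p by omega), Nat.choose_one_right]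
  have hlast : bernoulli (p-1) * ((p.choose (p-1) : ℕ):ℚ) * (p:ℚ)^(p-(p-1)) / p
      = (p:ℚ) * bernoulli (p-1) := by
    rw [hchoose]
    have h2 : p - (p-1) = 1 := by omega
    rw [h2, pow_one]
    field_simp
  set T : ℚ := ∑ i ∈ range (p-1), bernoulli i * ((p.choose i : ℕ):ℚ) * (p:ℚ)^(p-i) / p with hT
  have hB : (p:ℚ) * bernoulli (p-1) = (∑ k ∈ range p, (k:ℚ)^(p-1)) - T := by
    simp only [hT] at hF ⊢
    linear_combination -hF - hlast
  set E : ℚ := ∑ i ∈ range (p-1), bernoulli i * ((p.choose i : ℕ):ℚ) * (p:ℚ)^(p-i) / p^3 with hE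
  have hTE : T = (p:ℚ)^2 * E := by
    rw [hT, hE, Finset.mul_sum]
    apply Finset.sum_congr rfl
    intro i _
    field_simp
  have hkey : (p:ℚ) * bernoulli (p-1) = ((p-1)! : ℚ) + p + p^2*m - p^2*E := by
    linear_combination hB + hS - hTE
  refine ⟨E - m, ?_, ?_⟩
  · field_simp
    linear_combination -hkey
  · apply not_dvd_den_of_pnorm_le_one
    apply pnorm_sub_le
    · rw [hE]
      apply padicNorm.sum_le' _ zero_le_one
      intro i hi
      have hip : i < p - 1 := Finset.mem_range.mp hi
      rcases Nat.eq_zero_or_pos i with h0 | h1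
      · subst h0
        have : bernoulli 0 * ((p.choose 0 : ℕ):ℚ) * (p:ℚ)^(p-0) / p^3
            = ((p^(p-3) : ℕ):ℚ) := by
          rw [bernoulli_zero, Nat.choose_zero_right]
          push_cast
          rw [show (p:ℚ)^(p-0) = (p:ℚ)^(p-3) * (p:ℚ)^3 by
            rw [← pow_add]; congr 1; omega]
          field_simp
        rw [this]
        exact padicNorm.of_nat _
      · obtain ⟨c, hc⟩ := Nat.Prime.dvd_choose_self hp (by omega) (by omega : i < p)
        have hterm : bernoulli i * ((p.choose i : ℕ):ℚ) * (p:ℚ)^(p-i) / p^3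
            = bernoulli i * ((c:ℕ):ℚ) * (p:ℚ)^(p-i-2) := by
          rw [hc]
          push_cast
          rw [show (p:ℚ)^(p-i) = (p:ℚ)^(p-i-2) * (p:ℚ)^2 by
            rw [← pow_add]; congr 1; omega]
          field_simp
        rw [hterm]
        apply pnorm_mul_le_one
        apply pnorm_mul_le_one
        · exact bernoulli_pnorm_le_one p hp h5 i (by omega)
        · exact padicNorm.of_nat _
        · rw [show ((p:ℚ))^(p-i-2) = (((p^(p-i-2) : ℕ)):ℚ) by push_cast; ring]
          exact padicNorm.of_nat _
    · exact padicNorm.of_int m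
end
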